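/- arXiv:math/0503417 — 5 statements merged into one kernel-verified Lean document; each statement's English description precedes it below -/
import Mathlib

section
/- Let E : Ring → AbGroup be a split-exact functor (i.e. E sends split short exact sequences of rings to split short exact sequences of abelian groups). If φ, ψ : A → B are ring homomorphisms with φ(x)ψ(y) = ψ(x)φ(y) = 0 for all x, y ∈ A, then the pointwise sum φ + ψ is a ring homomorphism and E(φ + ψ) = E(φ) + E(ψ). -/
/-- A functor `E` from (possibly non-unital) rings to abelian groups. -/
structure AbGroupValuedFunctor where
  obj : (A : Type) → [inst : NonUnitalRing A] → Type
  grp : (A : Type) → [inst : NonUnitalRing A] → AddCommGroup (obj A)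
  map : {A B : Type} → [instA : NonUnitalRing A] → [instB : NonUnitalRing B] →
    (A →ₙ+* B) → obj A → obj B
  map_id : ∀ (A : Type) [inst : NonUnitalRing A], map (NonUnitalRingHom.id A) = id
  map_comp : ∀ {A B C : Type} [NonUnitalRing A] [NonUnitalRing B] [NonUnitalRing C]
    (f : A →ₙ+* B) (g : B →ₙ+* C), map (g.comp f) = map g ∘ map f
  map_add : ∀ {A B : Type} [NonUnitalRing A] [NonUnitalRing B] (f : A →ₙ+* B),
    letI := grp A; letI := grp B;
    ∀ x y : obj A, map f (x + y) = map f x + map f y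

/-- `E` is split-exact: every split extension `0 → I → D → A → 0` of rings
(with `i` injective, `ker p = range i`, and a ring homomorphism section `s`
of `p`) is carried to a (split) short exact sequence of abelian groups. -/
def AbGroupValuedFunctor.IsSplitExact (F : AbGroupValuedFunctor) : Prop :=
  ∀ (I D A : Type) [NonUnitalRing I] [NonUnitalRing D] [NonUnitalRing A]
    (i : I →ₙ+* D) (p : D →ₙ+* A) (s : A →ₙ+* D),
    Function.Injective i → (∀ d : D, p d = 0 ↔ d ∈ Set.range i) →
    p.comp s = NonUnitalRingHom.id A →
    letI := F.grp I; letI := F.grp D; letI := F.grp A;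
    Function.Injective (F.map i) ∧ Function.Surjective (F.map p) ∧
      ∀ x, F.map p x = 0 ↔ x ∈ Set.range (F.map i)

/-!
Multiplicativity of `φ + ψ` is the usual expansion of `(φ x + ψ x)(φ y + ψ y)`, whose cross
terms vanish by orthogonality; for the same reason `(a, b) ↦ φ a + ψ b` is a ring homomorphism
`μ : A × A → B`, and `φ + ψ = μ ∘ Δ` with `Δ` the diagonal.

Split exactness of `0 → A → A × A → A → 0` (with `inl`, `snd`, and `inr` as section), together
with `E(0) = 0` (split exactness over the zero ring), makes `E(A × A) = E(inl) E(A) ⊕ E(inr) E(A)`,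
so `E(Δ) = E(inl) + E(inr)`. Composing with `E(μ)` and using `μ inl = φ`, `μ inr = ψ` gives
`E(φ + ψ) = E(φ) + E(ψ)`.
-/

namespace NonUnitalRingHom

variable (A B : Type*) [NonUnitalNonAssocSemiring A] [NonUnitalNonAssocSemiring B]

def inl : A →ₙ+* A × B := (NonUnitalRingHom.id A).prod 0

def inr : B →ₙ+* A × B := (0 : B →ₙ+* A).prod (NonUnitalRingHom.id B)

theorem fst_comp_inl : (fst A B).comp (inl A B) = NonUnitalRingHom.id A := rfl

theorem fst_comp_inr : (fst A B).comp (inr A B) = 0 := rfl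

theorem snd_comp_inl : (snd A B).comp (inl A B) = 0 := rfl

theorem snd_comp_inr : (snd A B).comp (inr A B) = NonUnitalRingHom.id B := rfl

variable {A B} {C : Type*} [NonUnitalNonAssocSemiring C]

def coprodOfOrthogonal (φ : A →ₙ+* C) (ψ : B →ₙ+* C) (h₁ : ∀ x y, φ x * ψ y = 0)
    (h₂ : ∀ y x, ψ y * φ x = 0) : A × B →ₙ+* C where
  toFun c := φ c.1 + ψ c.2
  map_mul' c d := by
    simp only [Prod.fst_mul, Prod.snd_mul, map_mul, add_mul, mul_add, h₁, h₂, add_zero, zero_add]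
  map_zero' := by simp
  map_add' c d := by
    simp only [Prod.fst_add, Prod.snd_add, map_add]
    abel

variable (φ : A →ₙ+* C) (ψ : B →ₙ+* C) (h₁ : ∀ x y, φ x * ψ y = 0) (h₂ : ∀ y x, ψ y * φ x = 0)

@[simp]
theorem coprodOfOrthogonal_apply (c : A × B) :
    coprodOfOrthogonal φ ψ h₁ h₂ c = φ c.1 + ψ c.2 := rfl

theorem coprodOfOrthogonal_comp_inl : (coprodOfOrthogonal φ ψ h₁ h₂).comp (inl A B) = φ := by
  ext x
  simp [inl]

theorem coprodOfOrthogonal_comp_inr : (coprodOfOrthogonal φ ψ h₁ h₂).comp (inr A B) = ψ := by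
  ext x
  simp [inr]

end NonUnitalRingHom

namespace AbGroupValuedFunctor

open NonUnitalRingHom

attribute [local instance] AbGroupValuedFunctor.grp

variable (F : AbGroupValuedFunctor) {X Y Z : Type} [NonUnitalRing X] [NonUnitalRing Y]
  [NonUnitalRing Z]

def mapAddHom (f : X →ₙ+* Y) : F.obj X →+ F.obj Y := AddMonoidHom.mk' (F.map f) (F.map_add f)

theorem map_apply_zero (f : X →ₙ+* Y) : F.map f 0 = 0 := (F.mapAddHom f).map_zero

theorem map_apply_sub (f : X →ₙ+* Y) (x y : F.obj X) :
    F.map f (x - y) = F.map f x - F.map f y :=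
  (F.mapAddHom f).map_sub x y

theorem map_map (f : X →ₙ+* Y) (g : Y →ₙ+* Z) (x : F.obj X) :
    F.map g (F.map f x) = F.map (g.comp f) x := by
  rw [F.map_comp, Function.comp_apply]

theorem map_id_apply (x : F.obj X) : F.map (NonUnitalRingHom.id X) x = x := by
  rw [F.map_id, id]

variable {F}

theorem subsingleton_obj_of_isSplitExact (hF : F.IsSplitExact) [Subsingleton X] :
    Subsingleton (F.obj X) := by
  let i := NonUnitalRingHom.id X
  obtain ⟨-, -, hker⟩ := hF X X X i i i (fun _ _ h => h)
    (fun d => ⟨fun _ => ⟨d, rfl⟩, fun _ => Subsingleton.elim _ _⟩) rfl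
  refine ⟨fun x y => ?_⟩
  have hzero (x : F.obj X) : x = 0 := by
    rw [← F.map_id_apply x]
    exact (hker x).mpr ⟨x, F.map_id_apply x⟩
  rw [hzero x, hzero y]

theorem map_zero_apply (hF : F.IsSplitExact) (x : F.obj X) :
    F.map (0 : X →ₙ+* Y) x = 0 := by
  have := subsingleton_obj_of_isSplitExact (X := PUnit) hF
  have hfac : (0 : X →ₙ+* Y) = (0 : PUnit →ₙ+* Y).comp (0 : X →ₙ+* PUnit) := rfl
  rw [hfac, ← F.map_map, Subsingleton.elim (F.map _ x) 0, map_apply_zero]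

theorem map_inl_fst_add_map_inr_snd (hF : F.IsSplitExact) (w : F.obj (X × Y)) :
    F.map (inl X Y) (F.map (fst X Y) w) + F.map (inr X Y) (F.map (snd X Y) w) = w := by
  obtain ⟨-, -, hker⟩ := hF X (X × Y) Y (inl X Y) (snd X Y) (inr X Y)
    (fun _ _ h => congrArg Prod.fst h)
    (fun d => ⟨fun h => ⟨d.1, Prod.ext rfl h.symm⟩, fun ⟨_, ha⟩ => ha ▸ rfl⟩)
    (snd_comp_inr X Y)
  set v := w - F.map (inr X Y) (F.map (snd X Y) w)
  have hv : F.map (snd X Y) v = 0 := by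
    rw [map_apply_sub, map_map, snd_comp_inr, map_id_apply, sub_self]
  obtain ⟨u, hu⟩ := (hker v).mp hv
  have hfst : u = F.map (fst X Y) w := by
    have := congrArg (F.map (fst X Y)) hu
    rwa [map_map, fst_comp_inl, map_id_apply, map_apply_sub, map_map, fst_comp_inr,
      map_zero_apply hF, sub_zero] at this
  rw [← hfst, hu, sub_add_cancel]

theorem map_prod_apply (hF : F.IsSplitExact) (f : Z →ₙ+* X) (g : Z →ₙ+* Y) (z : F.obj Z) :
    F.map (f.prod g) z = F.map ((inl X Y).comp f) z + F.map ((inr X Y).comp g) z := by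
  rw [← map_inl_fst_add_map_inr_snd hF (F.map (f.prod g) z), F.map_map _ (fst X Y),
    fst_comp_prod, F.map_map f, F.map_map _ (snd X Y), snd_comp_prod, F.map_map g]

end AbGroupValuedFunctor

/-- Let `E` be a split-exact functor from rings to abelian groups.  If
`φ, ψ : A → B` are ring homomorphisms with `φ(x)ψ(y) = ψ(x)φ(y) = 0` for all
`x, y`, then the pointwise sum `φ + ψ` is a ring homomorphism and
`E(φ + ψ) = E(φ) + E(ψ)`. -/
theorem splitExact_functor_additive_on_orthogonal
    (F : AbGroupValuedFunctor) (hF : F.IsSplitExact)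
    (A B : Type) [NonUnitalRing A] [NonUnitalRing B]
    (φ ψ : A →ₙ+* B)
    (h1 : ∀ x y : A, φ x * ψ y = 0) (h2 : ∀ x y : A, ψ x * φ y = 0) :
    ∃ χ : A →ₙ+* B, (∀ x, χ x = φ x + ψ x) ∧
      (letI := F.grp A; letI := F.grp B;
        ∀ z : F.obj A, F.map χ z = F.map φ z + F.map ψ z) := by
  let μ := NonUnitalRingHom.coprodOfOrthogonal φ ψ h1 h2
  let Δ := (NonUnitalRingHom.id A).prod (NonUnitalRingHom.id A)
  refine ⟨μ.comp Δ, fun _ => rfl, fun z => ?_⟩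
  rw [← F.map_map, F.map_prod_apply hF, F.map_add, F.map_map, F.map_map,
    NonUnitalRingHom.comp_id, NonUnitalRingHom.comp_id,
    NonUnitalRingHom.coprodOfOrthogonal_comp_inl, NonUnitalRingHom.coprodOfOrthogonal_comp_inr]
end

section
/- Let D be a unital ring with a two-sided ideal I, and let U, U' be invertibles and P, P' idempotents in D such that [U,P] ∈ I, [U',P'] ∈ I, and PU − P'U' ∈ I. Then P ≡ P' mod I. -/
/-- Let `D` be a unital ring with a two-sided ideal `I`, let `U, U'` be
invertible elements and `P, P'` idempotents of `D` such that `[U,P] ∈ I`,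
`[U',P'] ∈ I`, and `PU − P'U' ∈ I`.  Then `P ≡ P'` mod `I`. -/
theorem idempotents_congruent_mod_ideal
    {D : Type*} [Ring D] (I : TwoSidedIdeal D)
    (U U' : Dˣ) (P P' : D)
    (hP : P * P = P) (hP' : P' * P' = P')
    (hUP : (U : D) * P - P * U ∈ I)
    (hUP' : (U' : D) * P' - P' * U' ∈ I)
    (h : P * U - P' * U' ∈ I) :
    P - P' ∈ I := by
  rw [← I.rel_iff] at hUP hUP' h ⊢
  rw [show ∀ x y : D, I.ringCon x y ↔ I.ringCon.mk' x = I.ringCon.mk' y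
    from fun x y => (RingCon.eq I.ringCon).symm] at hUP hUP' h ⊢
  set f := I.ringCon.mk' with hf
  simp only [map_mul] at hUP hUP' h
  set p := f P
  set q := f P'
  set u := f (U : D)
  set u' := f (U' : D)
  have hui1 : u * f ((U⁻¹ : Dˣ) : D) = 1 := by rw [← map_mul]; simp
  have hui2 : f ((U⁻¹ : Dˣ) : D) * u = 1 := by rw [← map_mul]; simp
  have hu'i1 : u' * f ((U'⁻¹ : Dˣ) : D) = 1 := by rw [← map_mul]; simp
  have hu'i2 : f ((U'⁻¹ : Dˣ) : D) * u' = 1 := by rw [← map_mul]; simp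
  set ui := f ((U⁻¹ : Dˣ) : D)
  set u'i := f ((U'⁻¹ : Dˣ) : D)
  have hpp : p * p = p := by rw [← map_mul, hP]
  have hqq : q * q = q := by rw [← map_mul, hP']
  -- ui commutes with p
  have huip : ui * p = p * ui := by
    calc ui * p = ui * p * (u * ui) := by rw [hui1, mul_one]
      _ = ui * (p * u) * ui := by simp only [mul_assoc]
      _ = ui * (u * p) * ui := by rw [← hUP]
      _ = (ui * u) * p * ui := by simp only [mul_assoc]
      _ = p * ui := by rw [hui2, one_mul]
  -- step 1: p = ui * u' * q
  have h1 : ui * u' * q = p := by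
    calc ui * u' * q = ui * (u' * q) := by simp only [mul_assoc]
      _ = ui * (q * u') := by rw [hUP']
      _ = ui * (p * u) := by rw [← h]
      _ = (ui * p) * u := by simp only [mul_assoc]
      _ = p * (ui * u) := by rw [huip, mul_assoc]
      _ = p := by rw [hui2, mul_one]
  -- step 2: p * q = p
  have h2 : p * q = p := by
    calc p * q = (ui * u' * q) * q := by rw [h1]
      _ = ui * u' * (q * q) := by simp only [mul_assoc]
      _ = ui * u' * q := by rw [hqq]
      _ = p := h1
  -- step 3: q = p * u * u'i
  have h3 : p * u * u'i = q := by
    rw [h, mul_assoc, hu'i1, mul_one]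
  -- step 4: p * q = q
  have h4 : p * q = q := by
    calc p * q = p * (p * u * u'i) := by rw [h3]
      _ = (p * p) * u * u'i := by simp only [mul_assoc]
      _ = p * u * u'i := by rw [hpp]
      _ = q := h3
  rw [← h2, h4]
end

section
/- For g, h in a Banach algebra A, the element e^{g+h}e^{-g}e^{-h} − 1 lies in the closure of the ideal generated by the products g², gh, hg, h²; more precisely, e^{g+h}e^{-g}e^{-h} − 1 can be written as a sum of four terms, each a product of one of g², gh, hg, h² with an element of the unitization A⁺. -/
/-!
Truncating the exponential series after the linear term gives `exp x = 1 + x + x² r` for some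
`r`. Multiplying out `(1 + (g+h) + (g+h)² a)(1 - g + g² b)(1 - h + h² c)`, the linear terms
cancel, and every remaining term starts with one of `g², gh, hg, h²`, because
`(g+h)² = g² + gh + hg + h²` and any word of length at least two in `g, h` does.
-/

open NormedSpace
open scoped Nat

section ExpExpansion

variable {𝔸 : Type*} [NormedRing 𝔸]

theorem summable_inv_factorial_add_two_smul_pow (𝕂 : Type*) [RCLike 𝕂] [NormedAlgebra 𝕂 𝔸]
    [CompleteSpace 𝔸] (x : 𝔸) : Summable fun n : ℕ => ((n + 2)! : 𝕂)⁻¹ • x ^ n := by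
  refine .of_norm_bounded (norm_expSeries_summable' (𝕂 := 𝕂) x) fun n => ?_
  rw [norm_smul, norm_smul]
  gcongr
  simp only [norm_inv, RCLike.norm_natCast]
  gcongr
  omega

theorem exists_exp_eq_one_add_add_mul_mul (𝕂 : Type*) [RCLike 𝕂] [NormedAlgebra 𝕂 𝔸]
    [CompleteSpace 𝔸] (x : 𝔸) : ∃ r : 𝔸, exp x = 1 + x + x * x * r := by
  refine ⟨∑' n : ℕ, ((n + 2)! : 𝕂)⁻¹ • x ^ n, ?_⟩
  rw [← (exp_series_hasSum_exp' (𝕂 := 𝕂) x).tsum_eq,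
    ← (expSeries_summable' (𝕂 := 𝕂) x).sum_add_tsum_nat_add 2,
    ← (summable_inv_factorial_add_two_smul_pow 𝕂 x).tsum_mul_left]
  simp [Finset.sum_range_succ, pow_succ', mul_assoc]

end ExpExpansion

theorem exists_second_order_product_sub_one_eq {R : Type*} [Ring R] (g h a b c : R) :
    ∃ c₁ c₂ c₃ c₄ : R,
      (1 + (g + h) + (g + h) * (g + h) * a) * (1 + -g + -g * -g * b) *
          (1 + -h + -h * -h * c) - 1 =
        g * g * c₁ + g * h * c₂ + h * g * c₃ + h * h * c₄ := by
  set u := 1 + -g + -g * -g * b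
  set v := 1 + -h + -h * -h * c
  -- The first two factors multiply to `1 + h + g²(b - 1 + g b) + hg(-1 + g b) + (g+h)² a u`,
  -- and `(1 + h) v = 1 + h²(c - 1 + h c)`.
  refine ⟨(b - 1 + g * b + a * u) * v, a * u * v, (-1 + g * b + a * u) * v,
    a * u * v + (c - 1 + h * c), ?_⟩
  simp only [u, v]
  noncomm_ring

/-- For `g, h` in a Banach algebra `A` (with exponentials computed in the
unitization `A⁺`, here modelled by a unital Banach algebra containing `g`
and `h`), the element `e^{g+h} e^{-g} e^{-h} − 1` can be written as a sum of
four terms, each the product of one of `g², gh, hg, h²` with an element of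
`A⁺`; in particular it lies in the (closure of the) ideal generated by these
products. -/
theorem exp_commutator_defect_in_square_ideal
    {A : Type*} [NormedRing A] [NormedAlgebra ℂ A] [CompleteSpace A]
    (g h : A) :
    ∃ c₁ c₂ c₃ c₄ : A,
      NormedSpace.exp (g + h) * NormedSpace.exp (-g) * NormedSpace.exp (-h) - 1 =
        g * g * c₁ + g * h * c₂ + h * g * c₃ + h * h * c₄ := by
  obtain ⟨a, ha⟩ := exists_exp_eq_one_add_add_mul_mul ℂ (g + h)
  obtain ⟨b, hb⟩ := exists_exp_eq_one_add_add_mul_mul ℂ (-g)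
  obtain ⟨c, hc⟩ := exists_exp_eq_one_add_add_mul_mul ℂ (-h)
  rw [ha, hb, hc]
  exact exists_second_order_product_sub_one_eq g h a b c
end

section
/- Let N be the diagonal (unbounded) operator on ℓ²(ℤ) with N(e_i) = |1+i| e_i, and let 𝒦 be the set of bounded operators a such that N^i a N^j extends to a bounded operator for all i, j ∈ ℕ. Define η_k(a) = ∑_{i+j=k} ‖N^i a N^j‖. Then η_k(ab) ≤ ∑_{i+j=k} η_i(a) η_j(b) for all a, b ∈ 𝒦, and consequently the norms ‖a‖_k = ∑_{0≤j≤k} η_j(a) are submultiplicative: ‖ab‖_k ≤ ‖a‖_k ‖b‖_k. -/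
/-!
Since `N^i (ab) N^j = (N^i a)(b N^j)`, submultiplicativity of the operator norm gives
`‖N^i (ab) N^j‖ ≤ ‖N^i a‖ ‖b N^j‖ ≤ η_i(a) η_j(b)`, and summing over `i + j = k` yields the
first inequality. Summing it over `k ≤ n`, the pairs `(i, j)` that occur satisfy `i + j ≤ n`,
so they form part of the square `{0, …, n}²`, whose sum of `η_i(a) η_j(b)` is `‖a‖_n ‖b‖_n`.
-/

open Finset

theorem Finset.sum_range_sum_antidiagonal_le_sum_product {M : Type*} [AddCommMonoid M]
    [PartialOrder M] [IsOrderedAddMonoid M] {f : ℕ × ℕ → M} (hf : ∀ p, 0 ≤ f p) (n : ℕ) :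
    ∑ k ∈ range (n + 1), ∑ p ∈ antidiagonal k, f p ≤
      ∑ p ∈ range (n + 1) ×ˢ range (n + 1), f p := by
  have hdisj : (range (n + 1) : Set ℕ).PairwiseDisjoint antidiagonal := by
    intro k _ l _ hkl
    simp only [Function.onFun, disjoint_left, HasAntidiagonal.mem_antidiagonal]
    exact fun _ hk hl => hkl (hk ▸ hl)
  rw [← sum_biUnion hdisj]
  refine sum_le_sum_of_subset_of_nonneg (fun p hp => ?_) fun p _ _ => hf p
  simp only [mem_biUnion, HasAntidiagonal.mem_antidiagonal, mem_range] at hp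
  simp only [mem_product, mem_range]
  omega

theorem Finset.sum_range_sum_antidiagonal_mul_le {R : Type*} [CommSemiring R] [PartialOrder R]
    [IsOrderedRing R] {u v : ℕ → R} (hu : ∀ i, 0 ≤ u i) (hv : ∀ j, 0 ≤ v j) (n : ℕ) :
    ∑ k ∈ range (n + 1), ∑ p ∈ antidiagonal k, u p.1 * v p.2 ≤
      (∑ i ∈ range (n + 1), u i) * ∑ j ∈ range (n + 1), v j := by
  rw [sum_mul_sum, ← sum_product']
  exact sum_range_sum_antidiagonal_le_sum_product (fun p => mul_nonneg (hu p.1) (hv p.2)) n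

section AntidiagonalNormSum

variable {A : Type*} [NormedRing A] (T : ℕ → A → ℕ → A)

/-- The paper's `η_k`, with `T i a j` standing for `N^i a N^j`. -/
def antidiagonalNormSum (k : ℕ) (a : A) : ℝ :=
  ∑ p ∈ antidiagonal k, ‖T p.1 a p.2‖

theorem antidiagonalNormSum_nonneg (k : ℕ) (a : A) : 0 ≤ antidiagonalNormSum T k a :=
  sum_nonneg fun _ _ => norm_nonneg _

theorem norm_le_antidiagonalNormSum (i : ℕ) (a : A) (j : ℕ) :
    ‖T i a j‖ ≤ antidiagonalNormSum T (i + j) a :=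
  single_le_sum (f := fun p : ℕ × ℕ => ‖T p.1 a p.2‖) (fun _ _ => norm_nonneg _)
    (HasAntidiagonal.mem_antidiagonal.mpr rfl : (i, j) ∈ antidiagonal (i + j))

variable {T}

theorem antidiagonalNormSum_mul_le {a b : A}
    (hT : ∀ i j, T i (a * b) j = T i a 0 * T 0 b j) (k : ℕ) :
    antidiagonalNormSum T k (a * b) ≤
      ∑ p ∈ antidiagonal k, antidiagonalNormSum T p.1 a * antidiagonalNormSum T p.2 b := by
  refine sum_le_sum fun p _ => ?_
  calc ‖T p.1 (a * b) p.2‖ = ‖T p.1 a 0 * T 0 b p.2‖ := by rw [hT]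
    _ ≤ ‖T p.1 a 0‖ * ‖T 0 b p.2‖ := norm_mul_le _ _
    _ ≤ antidiagonalNormSum T p.1 a * antidiagonalNormSum T p.2 b :=
      mul_le_mul (norm_le_antidiagonalNormSum T p.1 a 0)
        (by simpa using norm_le_antidiagonalNormSum T 0 b p.2)
        (norm_nonneg _) (antidiagonalNormSum_nonneg T _ _)

theorem sum_range_antidiagonalNormSum_mul_le {a b : A}
    (hT : ∀ i j, T i (a * b) j = T i a 0 * T 0 b j) (n : ℕ) :
    ∑ k ∈ range (n + 1), antidiagonalNormSum T k (a * b) ≤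
      (∑ k ∈ range (n + 1), antidiagonalNormSum T k a) *
        ∑ k ∈ range (n + 1), antidiagonalNormSum T k b :=
  (sum_le_sum fun k _ => antidiagonalNormSum_mul_le hT k).trans <|
    sum_range_sum_antidiagonal_mul_le (antidiagonalNormSum_nonneg T · a)
      (antidiagonalNormSum_nonneg T · b) n

end AntidiagonalNormSum

theorem differential_seminorm_submultiplicative_general
    {A : Type*} [NormedRing A] (K : Set A)
    (T : ℕ → A → ℕ → A)
    (hTmul : ∀ a ∈ K, ∀ b ∈ K, ∀ i j : ℕ, T i (a * b) j = T i a 0 * T 0 b j) :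
    let η : ℕ → A → ℝ := fun k a => ∑ p ∈ Finset.HasAntidiagonal.antidiagonal k, ‖T p.1 a p.2‖
    (∀ a ∈ K, ∀ b ∈ K, ∀ k : ℕ,
        η k (a * b) ≤ ∑ p ∈ Finset.HasAntidiagonal.antidiagonal k, η p.1 a * η p.2 b) ∧
      (∀ a ∈ K, ∀ b ∈ K, ∀ k : ℕ,
        ∑ j ∈ Finset.range (k + 1), η j (a * b) ≤
          (∑ j ∈ Finset.range (k + 1), η j a) * (∑ j ∈ Finset.range (k + 1), η j b)) :=
  ⟨fun a ha b hb => antidiagonalNormSum_mul_le (hTmul a ha b hb),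
    fun a ha b hb => sum_range_antidiagonalNormSum_mul_le (hTmul a ha b hb)⟩

/-- Let `N` be the diagonal operator on `ℓ²(ℤ)` with `N e_i = |1+i| e_i`, and
let `𝒦` be the algebra of `a ∈ B(ℓ²(ℤ))` such that `N^i a N^j` extends to a
bounded operator for all `i, j`.  Abstractly: `K` is a subset of a normed
ring, and `T i a j` denotes the bounded extension of `N^i a N^j`; the key
algebraic identity is `N^i (ab) N^j = (N^i a)(b N^j)`, i.e.
`T i (ab) j = (T i a 0) * (T 0 b j)`.  Then, with
`η_k(a) = ∑_{i+j=k} ‖N^i a N^j‖`, one has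
`η_k(ab) ≤ ∑_{i+j=k} η_i(a) η_j(b)`, and consequently the norms
`‖a‖_k = ∑_{j≤k} η_j(a)` are submultiplicative: `‖ab‖_k ≤ ‖a‖_k ‖b‖_k`. -/
theorem differential_seminorm_submultiplicative
    {A : Type*} [NormedRing A] (K : Set A)
    (T : ℕ → A → ℕ → A)
    (hT0 : ∀ a ∈ K, T 0 a 0 = a)
    (hTmul : ∀ a ∈ K, ∀ b ∈ K, ∀ i j : ℕ, T i (a * b) j = T i a 0 * T 0 b j)
    (hKmul : ∀ a ∈ K, ∀ b ∈ K, a * b ∈ K) :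
    let η : ℕ → A → ℝ := fun k a => ∑ p ∈ Finset.HasAntidiagonal.antidiagonal k, ‖T p.1 a p.2‖
    (∀ a ∈ K, ∀ b ∈ K, ∀ k : ℕ,
        η k (a * b) ≤ ∑ p ∈ Finset.HasAntidiagonal.antidiagonal k, η p.1 a * η p.2 b) ∧
      (∀ a ∈ K, ∀ b ∈ K, ∀ k : ℕ,
        ∑ j ∈ Finset.range (k + 1), η j (a * b) ≤
          (∑ j ∈ Finset.range (k + 1), η j a) * (∑ j ∈ Finset.range (k + 1), η j b)) :=
  differential_seminorm_submultiplicative_general K T hTmul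
end

section
/- Let A be a matrix in M_n(R) over a ring R such that A is a finite sum of matrices of the following three types: (i) off-diagonal elementary matrices a·e_{ij} with i ≠ j, (ii) matrices of the form a·e_{ii} − a·e_{jj} with i ≠ j, (iii) a matrix a·e_{11} with a ∈ I² for an ideal I containing all entries. Then the trace of A lies in I². Conversely, every matrix A ∈ M_n(I) with tr(A) ∈ I² is such a finite sum. -/
/-! The trace is additive and kills the generators of types (i) and (ii), while a generator of
type (iii) has its trace in `I²`; this gives one direction. Conversely,
`A = ∑_{i ≠ j} A_{ij} e_{ij} + ∑_i A_{ii} (e_{ii} - e_{11}) + tr(A) e_{11}`. -/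

open Finset

namespace Matrix

theorem single_apply_mem {n α : Type*} [DecidableEq n] [AddGroup α] {I : AddSubgroup α} {a : α}
    (ha : a ∈ I) (i j k l : n) : single i j a k l ∈ I := by
  rw [single_apply]
  split_ifs
  exacts [ha, zero_mem I]

variable {n α : Type*} [Fintype n] [DecidableEq n] [AddCommGroup α]

theorem eq_sum_offDiag_add_sum_diag_sub_add_single_trace (A : Matrix n n α) (i₀ : n) :
    A = ∑ i, ∑ j ∈ univ.erase i, single i j (A i j) +
      ∑ i, (single i i (A i i) - single i₀ i₀ (A i i)) + single i₀ i₀ A.trace := by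
  have hrow (i : n) : ∑ j, single i j (A i j) =
      ∑ j ∈ univ.erase i, single i j (A i j) + single i i (A i i) :=
    (sum_erase_add _ _ (mem_univ i)).symm
  have hdiag : ∑ i, single i₀ i₀ (A i i) = single i₀ i₀ A.trace :=
    (map_sum (singleAddMonoidHom (α := α) i₀ i₀) _ _).symm
  conv_lhs => rw [matrix_eq_sum_single A]
  simp only [hrow, sum_add_distrib, sum_sub_distrib, hdiag]
  abel

def entriesTraceAddSubgroup (I J : AddSubgroup α) : AddSubgroup (Matrix n n α) where
  carrier := {A | (∀ i j, A i j ∈ I) ∧ A.trace ∈ J}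
  add_mem' hA hB :=
    ⟨fun i j => add_mem (hA.1 i j) (hB.1 i j), by rw [trace_add]; exact add_mem hA.2 hB.2⟩
  zero_mem' := ⟨fun _ _ => zero_mem I, by rw [trace_zero]; exact zero_mem J⟩
  neg_mem' hA := ⟨fun i j => neg_mem (hA.1 i j), by rw [trace_neg]; exact neg_mem hA.2⟩

def traceGenerators (I J : Set α) (i₀ : n) : Set (Matrix n n α) :=
  {M | ∃ i j : n, i ≠ j ∧ ∃ a ∈ I, M = single i j a} ∪
    {M | ∃ i j : n, i ≠ j ∧ ∃ a ∈ I, M = single i i a - single j j a} ∪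
    {M | ∃ a ∈ J, M = single i₀ i₀ a}

variable {I J : AddSubgroup α}

theorem closure_traceGenerators_le (hJI : J ≤ I) (i₀ : n) :
    AddSubgroup.closure (traceGenerators I J i₀) ≤ entriesTraceAddSubgroup I J := by
  rw [AddSubgroup.closure_le]
  rintro M ((⟨i, j, hij, a, ha, rfl⟩ | ⟨i, j, -, a, ha, rfl⟩) | ⟨a, ha, rfl⟩)
  · refine ⟨single_apply_mem ha i j, ?_⟩
    rw [trace_single_eq_of_ne _ _ _ hij]
    exact zero_mem J
  · refine ⟨fun k l => sub_mem (single_apply_mem ha i i k l) (single_apply_mem ha j j k l), ?_⟩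
    rw [trace_sub, trace_single_eq_same, trace_single_eq_same, sub_self]
    exact zero_mem J
  · refine ⟨single_apply_mem (hJI ha) i₀ i₀, ?_⟩
    rwa [trace_single_eq_same]

theorem mem_closure_traceGenerators_of_mem {A : Matrix n n α} (i₀ : n)
    (hA : A ∈ entriesTraceAddSubgroup I J) : A ∈ AddSubgroup.closure (traceGenerators I J i₀) := by
  obtain ⟨hentries, htrace⟩ := hA
  rw [eq_sum_offDiag_add_sum_diag_sub_add_single_trace A i₀]
  refine add_mem (add_mem ?_ ?_) ?_
  · refine sum_mem fun i _ => sum_mem fun j hj => AddSubgroup.subset_closure ?_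
    exact Or.inl (Or.inl ⟨i, j, (ne_of_mem_erase hj).symm, A i j, hentries i j, rfl⟩)
  · refine sum_mem fun i _ => ?_
    obtain rfl | hi := eq_or_ne i i₀
    · rw [sub_self]
      exact zero_mem _
    · exact AddSubgroup.subset_closure (Or.inl (Or.inr ⟨i, i₀, hi, A i i, hentries i i, rfl⟩))
  · exact AddSubgroup.subset_closure (Or.inr ⟨A.trace, htrace, rfl⟩)

theorem mem_closure_traceGenerators_iff (hJI : J ≤ I) (i₀ : n) (A : Matrix n n α) :
    A ∈ AddSubgroup.closure (traceGenerators I J i₀) ↔ (∀ i j, A i j ∈ I) ∧ A.trace ∈ J :=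
  ⟨fun hA => closure_traceGenerators_le hJI i₀ hA, mem_closure_traceGenerators_of_mem i₀⟩

end Matrix

theorem matrix_trace_in_square_ideal_decomposition_general
    {R : Type*} [Ring R] (I : Set R)
    (hI0 : (0 : R) ∈ I)
    (hIadd : ∀ x ∈ I, ∀ y ∈ I, x + y ∈ I)
    (hIl : ∀ r : R, ∀ x ∈ I, r * x ∈ I)
    (n : ℕ) [NeZero n] (A : Matrix (Fin n) (Fin n) R) :
    A ∈ AddSubgroup.closure
        ({M | ∃ i j : Fin n, i ≠ j ∧ ∃ a ∈ I, M = Matrix.single i j a} ∪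
         {M | ∃ i j : Fin n, i ≠ j ∧ ∃ a ∈ I,
            M = Matrix.single i i a - Matrix.single j j a} ∪
         {M | ∃ a ∈ (AddSubgroup.closure {z : R | ∃ x ∈ I, ∃ y ∈ I, z = x * y} : AddSubgroup R),
            M = Matrix.single 0 0 a}) ↔
      ((∀ i j, A i j ∈ I) ∧
        Matrix.trace A ∈
          (AddSubgroup.closure {z : R | ∃ x ∈ I, ∃ y ∈ I, z = x * y} : AddSubgroup R)) := by
  obtain ⟨L, rfl⟩ : ∃ L : Ideal R, (L : Set R) = I :=
    ⟨{ carrier := I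
       add_mem' := fun ha hb => hIadd _ ha _ hb
       zero_mem' := hI0
       smul_mem' := hIl }, rfl⟩
  have hsq_le : AddSubgroup.closure {z : R | ∃ x ∈ L, ∃ y ∈ L, z = x * y} ≤ L.toAddSubgroup :=
    (AddSubgroup.closure_le _).2 fun _ ⟨x, _, y, hy, hz⟩ => hz ▸ L.mul_mem_left x hy
  exact Matrix.mem_closure_traceGenerators_iff hsq_le 0 A

/-- Let `R` be a ring, `I` a two-sided ideal and `I²` the ideal of finite
sums of products of two elements of `I`.  A matrix `A ∈ M_n(R)` is a finite
sum of matrices of the three types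
(i) off-diagonal matrices `a·e_{ij}`, `i ≠ j`, with `a ∈ I`,
(ii) matrices `a·e_{ii} − a·e_{jj}`, `i ≠ j`, with `a ∈ I`, and
(iii) a matrix `a·e_{11}` with `a ∈ I²`,
if and only if all entries of `A` lie in `I` and `tr(A) ∈ I²`. -/
theorem matrix_trace_in_square_ideal_decomposition
    {R : Type*} [Ring R] (I : Set R)
    (hI0 : (0 : R) ∈ I)
    (hIadd : ∀ x ∈ I, ∀ y ∈ I, x + y ∈ I)
    (hIneg : ∀ x ∈ I, -x ∈ I)
    (hIl : ∀ r : R, ∀ x ∈ I, r * x ∈ I)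
    (hIr : ∀ x ∈ I, ∀ r : R, x * r ∈ I)
    (n : ℕ) [NeZero n] (A : Matrix (Fin n) (Fin n) R) :
    A ∈ AddSubgroup.closure
        ({M | ∃ i j : Fin n, i ≠ j ∧ ∃ a ∈ I, M = Matrix.single i j a} ∪
         {M | ∃ i j : Fin n, i ≠ j ∧ ∃ a ∈ I,
            M = Matrix.single i i a - Matrix.single j j a} ∪
         {M | ∃ a ∈ (AddSubgroup.closure {z : R | ∃ x ∈ I, ∃ y ∈ I, z = x * y} : AddSubgroup R),
            M = Matrix.single 0 0 a}) ↔
      ((∀ i j, A i j ∈ I) ∧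
        Matrix.trace A ∈
          (AddSubgroup.closure {z : R | ∃ x ∈ I, ∃ y ∈ I, z = x * y} : AddSubgroup R)) :=
  matrix_trace_in_square_ideal_decomposition_general I hI0 hIadd hIl n A
end
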